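/- arXiv:2209.08186 — 4 statements merged into one kernel-verified Lean document; each statement's English description precedes it below -/
import Mathlib

section
/- Let a, b > −1 and let s be a positive integer. Then: (i) for every integer n ≥ s and all real t, the s-th derivative of J_n^{(a−s,b−s)} satisfies (d/dt)^s J_n^{(a−s,b−s)}(t) = P̂_{n−s}^{(a,b)}(t); (ii) for every integer 0 ≤ k ≤ s−1, the k-th derivative at −1 satisfies (d/dt)^k J_n^{(a−s,b−s)}(−1) = δ_{k,n} if 0 ≤ n ≤ s−1, and (d/dt)^k J_n^{(a−s,b−s)}(−1) = 0 if n ≥ s. -/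
open MeasureTheory Finset

noncomputable section

/-- Pochhammer symbol `(x)_k`. -/
def poch (x : ℝ) (k : ℕ) : ℝ := (ascPochhammer ℝ k).eval x

/-- Jacobi polynomial `P_n^{(a,b)}` for real parameters. -/
def jacobiP (a b : ℝ) (n : ℕ) (t : ℝ) : ℝ :=
  (poch (a + 1) n / (n.factorial : ℝ)) *
    ∑ k ∈ Finset.range (n + 1),
      poch (-(n : ℝ)) k * poch ((n : ℝ) + a + b + 1) k /
        ((k.factorial : ℝ) * poch (a + 1) k) * ((1 - t) / 2) ^ k

/-- Normalizing constant `A_n^{(a,b)}`. -/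
def jacobiA (a b : ℝ) (n : ℕ) : ℝ := 2 ^ n / poch ((n : ℝ) + a + b + 1) n

/-- Normalized Jacobi polynomial `P̂_n^{(a,b)}`. -/
def jacobiPhat (a b : ℝ) (n : ℕ) (t : ℝ) : ℝ := jacobiA a b n * jacobiP a b n t

/-- The polynomials `J_n^{(a-s,b-s)}` (defined from the parameters `a, b > -1`). -/
def jacobiJ (a b : ℝ) (s n : ℕ) (t : ℝ) : ℝ :=
  if n < s then (1 + t) ^ n / (n.factorial : ℝ)
  else ∫ u in (-1 : ℝ)..t, (t - u) ^ (s - 1) / ((s - 1).factorial : ℝ) * jacobiPhat a b (n - s) u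

/-! For `n ≥ s`, Cauchy's formula for repeated integration (proved by integrating by parts
once per power of `t - u`) identifies `J_n^{(a-s,b-s)}` with the `s`-fold primitive of
`P̂_{n-s}^{(a,b)}` vanishing at `-1`. Differentiating `k ≤ s` times strips off `k` of these
primitives, and when `k < s` what is left still vanishes at `-1`. For `n < s`,
`J_n^{(a-s,b-s)}(t) = (t + 1)^n / n!`, whose `k`-th derivative at `-1` is `δ_{k,n}`. -/

lemma hasDerivAt_pow_succ_div_factorial (m : ℕ) (x : ℝ) :
    HasDerivAt (fun x : ℝ => x ^ (m + 1) / ((m + 1).factorial : ℝ))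
      (x ^ m / (m.factorial : ℝ)) x := by
  refine ((hasDerivAt_pow (m + 1) x).div_const _).congr_deriv ?_
  rw [Nat.factorial_succ]
  push_cast
  field_simp [Nat.cast_ne_zero.2 m.factorial_ne_zero]

lemma deriv_sub_pow_succ_div_factorial (c : ℝ) (m : ℕ) :
    deriv (fun x : ℝ => (x - c) ^ (m + 1) / ((m + 1).factorial : ℝ)) =
      fun x => (x - c) ^ m / (m.factorial : ℝ) := by
  funext x
  have := (hasDerivAt_pow_succ_div_factorial m (x - c)).comp x ((hasDerivAt_id x).sub_const c)
  rw [mul_one] at this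
  exact this.deriv

lemma iteratedDeriv_sub_pow_div_factorial_self (c : ℝ) (k n : ℕ) :
    iteratedDeriv k (fun x : ℝ => (x - c) ^ n / (n.factorial : ℝ)) c =
      if k = n then 1 else 0 := by
  induction k generalizing n with
  | zero => rcases n with _ | n <;> simp
  | succ k ih =>
    rcases n with _ | n
    · simp [iteratedDeriv_const]
    · rw [iteratedDeriv_succ', deriv_sub_pow_succ_div_factorial, ih]
      simp

def primitiveFrom (x₀ : ℝ) (g : ℝ → ℝ) (t : ℝ) : ℝ := ∫ u in x₀..t, g u

section primitiveFrom

variable {x₀ : ℝ} {g : ℝ → ℝ}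

lemma hasDerivAt_primitiveFrom (hg : Continuous g) (t : ℝ) :
    HasDerivAt (primitiveFrom x₀ g) (g t) t :=
  intervalIntegral.integral_hasDerivAt_right (hg.intervalIntegrable _ _)
    (hg.stronglyMeasurableAtFilter _ _) hg.continuousAt

lemma deriv_primitiveFrom (hg : Continuous g) : deriv (primitiveFrom x₀ g) = g :=
  funext fun t => (hasDerivAt_primitiveFrom hg t).deriv

lemma continuous_primitiveFrom (hg : Continuous g) : Continuous (primitiveFrom x₀ g) :=
  continuous_iff_continuousAt.2 fun t => (hasDerivAt_primitiveFrom hg t).continuousAt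

lemma primitiveFrom_self : primitiveFrom x₀ g x₀ = 0 :=
  intervalIntegral.integral_same

lemma continuous_iterate_primitiveFrom (hg : Continuous g) (j : ℕ) :
    Continuous ((primitiveFrom x₀)^[j] g) := by
  induction j with
  | zero => exact hg
  | succ j ih => rw [Function.iterate_succ_apply']; exact continuous_primitiveFrom ih

lemma iteratedDeriv_iterate_primitiveFrom (hg : Continuous g) {j k : ℕ} (hkj : k ≤ j) :
    iteratedDeriv k ((primitiveFrom x₀)^[j] g) = (primitiveFrom x₀)^[j - k] g := by
  obtain ⟨j, rfl⟩ := Nat.exists_eq_add_of_le' hkj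
  rw [Nat.add_sub_cancel]
  clear hkj
  induction k with
  | zero => rfl
  | succ k ih =>
    rw [iteratedDeriv_succ', ← add_assoc, Function.iterate_succ_apply',
      deriv_primitiveFrom (continuous_iterate_primitiveFrom hg _), ih]

lemma iterate_succ_primitiveFrom_self (j : ℕ) : (primitiveFrom x₀)^[j + 1] g x₀ = 0 := by
  rw [Function.iterate_succ_apply']
  exact primitiveFrom_self

lemma integral_sub_pow_succ_mul_eq_integral_mul_primitiveFrom (hg : Continuous g) (m : ℕ)
    (t : ℝ) :
    ∫ u in x₀..t, (t - u) ^ (m + 1) / ((m + 1).factorial : ℝ) * g u =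
      ∫ u in x₀..t, (t - u) ^ m / (m.factorial : ℝ) * primitiveFrom x₀ g u := by
  have hkernel (u : ℝ) : HasDerivAt (fun u => (t - u) ^ (m + 1) / ((m + 1).factorial : ℝ))
      (-((t - u) ^ m / (m.factorial : ℝ))) u :=
    ((hasDerivAt_pow_succ_div_factorial m (t - u)).comp u
      ((hasDerivAt_id u).const_sub t)).congr_deriv (by simp)
  rw [intervalIntegral.integral_mul_deriv_eq_deriv_mul (fun u _ => hkernel u)
    (fun u _ => hasDerivAt_primitiveFrom (x₀ := x₀) hg u)
    (by apply Continuous.intervalIntegrable; fun_prop) (hg.intervalIntegrable _ _)]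
  simp [primitiveFrom_self]

lemma integral_sub_pow_mul_eq_iterate_primitiveFrom (hg : Continuous g) (m : ℕ) (t : ℝ) :
    ∫ u in x₀..t, (t - u) ^ m / (m.factorial : ℝ) * g u =
      (primitiveFrom x₀)^[m + 1] g t := by
  induction m generalizing g with
  | zero => simp [primitiveFrom]
  | succ m ih =>
    rw [integral_sub_pow_succ_mul_eq_integral_mul_primitiveFrom hg,
      ih (continuous_primitiveFrom hg), ← Function.iterate_succ_apply]

end primitiveFrom

lemma continuous_jacobiPhat (a b : ℝ) (n : ℕ) : Continuous (jacobiPhat a b n) := by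
  unfold jacobiPhat jacobiP
  fun_prop

lemma jacobiJ_of_lt {a b : ℝ} {s n : ℕ} (hn : n < s) :
    jacobiJ a b s n = fun t => (t - -1) ^ n / (n.factorial : ℝ) := by
  funext t
  rw [jacobiJ, if_pos hn, sub_neg_eq_add, add_comm]

lemma jacobiJ_eq_iterate_primitiveFrom {a b : ℝ} {s n : ℕ} (hs : 1 ≤ s) (hn : s ≤ n) :
    jacobiJ a b s n = (primitiveFrom (-1))^[s] (jacobiPhat a b (n - s)) := by
  funext t
  obtain ⟨m, rfl⟩ : ∃ m, s = m + 1 := ⟨s - 1, by omega⟩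
  rw [jacobiJ, if_neg (by omega), Nat.add_sub_cancel,
    integral_sub_pow_mul_eq_iterate_primitiveFrom (continuous_jacobiPhat a b _)]

theorem jacobiJ_deriv_general (a b : ℝ) (s : ℕ) (hs : 1 ≤ s) :
    (∀ n : ℕ, s ≤ n → ∀ t : ℝ,
      iteratedDeriv s (jacobiJ a b s n) t = jacobiPhat a b (n - s) t) ∧
    (∀ n k : ℕ, k ≤ s - 1 →
      (n ≤ s - 1 → iteratedDeriv k (jacobiJ a b s n) (-1) = if k = n then 1 else 0) ∧
      (s ≤ n → iteratedDeriv k (jacobiJ a b s n) (-1) = 0)) := by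
  refine ⟨fun n hn t => ?_, fun n k hk => ⟨fun hn => ?_, fun hn => ?_⟩⟩
  · rw [jacobiJ_eq_iterate_primitiveFrom hs hn,
      iteratedDeriv_iterate_primitiveFrom (continuous_jacobiPhat a b _) le_rfl, Nat.sub_self]
    rfl
  · rw [jacobiJ_of_lt (by omega), iteratedDeriv_sub_pow_div_factorial_self]
  · rw [jacobiJ_eq_iterate_primitiveFrom hs hn,
      iteratedDeriv_iterate_primitiveFrom (continuous_jacobiPhat a b _) (by omega),
      show s - k = s - k - 1 + 1 by omega, iterate_succ_primitiveFrom_self]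

/-- derivatives of `J_n^{(a-s,b-s)}`. -/
theorem jacobiJ_deriv (a b : ℝ) (ha : -1 < a) (hb : -1 < b) (s : ℕ) (hs : 1 ≤ s) :
    (∀ n : ℕ, s ≤ n → ∀ t : ℝ,
      iteratedDeriv s (jacobiJ a b s n) t = jacobiPhat a b (n - s) t) ∧
    (∀ n k : ℕ, k ≤ s - 1 →
      (n ≤ s - 1 → iteratedDeriv k (jacobiJ a b s n) (-1) = if k = n then 1 else 0) ∧
      (s ≤ n → iteratedDeriv k (jacobiJ a b s n) (-1) = 0)) :=
  jacobiJ_deriv_general a b s hs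

end
end

section
/- Let a > −1 be real and let s ≥ 1 and n ≥ 0 be integers. Then for all real t, ∫_{−1}^{t} ((t−u)^{s−1}/(s−1)!) P_n^{(a+s,0)}(u) du = (n!/(n+s)!) · (1+t)^s · P_n^{(a,s)}(t). -/
open MeasureTheory Finset

noncomputable section

/-!
The right-hand side is `n!/(n+s)!` times `G(t) = (1+t)^s P_n^{(a,s)}(t)`. Iterating the contiguous
relation `d/dt [(1+t)^(b+1) P_n^{(a,b+1)}] = (n+b+1) (1+t)^b P_n^{(a+1,b)}` shows that `G` has a
zero of order `s` at `-1` and that `G^{(s)} = ((n+s)!/n!) P_n^{(a+s,0)}`. Taylor's formula at `-1`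
with integral remainder is then exactly the claimed identity.
-/

theorem eq_integral_iteratedDeriv_of_iteratedDeriv_eq_zero {F : Type*} [NormedAddCommGroup F]
    [NormedSpace ℝ F] [CompleteSpace F] {f : ℝ → F} {m : ℕ}
    (hf : ContDiff ℝ (m + 1 : ℕ) f) {x₀ : ℝ} (h₀ : ∀ k ≤ m, iteratedDeriv k f x₀ = 0) (x : ℝ) :
    f x = ∫ u in x₀..x, ((x - u) ^ m / m.factorial) • iteratedDeriv (m + 1) f u := by
  rcases eq_or_ne x₀ x with rfl | hx
  · simpa using h₀ 0 (Nat.zero_le _)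
  have h_within : ∀ k ≤ m + 1, ∀ u ∈ Set.uIcc x₀ x,
      iteratedDerivWithin k f (Set.uIcc x₀ x) u = iteratedDeriv k f u := fun k hk u hu =>
    iteratedDerivWithin_eq_iteratedDeriv (uniqueDiffOn_uIcc hx)
      (hf.contDiffAt.of_le (by exact_mod_cast hk)) hu
  have h_taylor := taylor_integral_remainder (x₀ := x₀) (x := x) hf.contDiffOn
  rw [taylor_within_apply, sum_eq_zero fun k hk => by
    have hk : k ≤ m := Nat.lt_succ_iff.mp (mem_range.mp hk)
    rw [h_within k (by omega) x₀ Set.left_mem_uIcc, h₀ k hk, smul_zero], sub_zero] at h_taylor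
  rw [h_taylor]
  exact intervalIntegral.integral_congr fun u hu => by rw [h_within (m + 1) le_rfl u hu]

lemma one_sub_mul_sum_mul_pow_pred {R : Type*} [CommRing R] {n : ℕ} (q : ℕ → R)
    (hq : q (n + 1) = 0) (x : R) :
    (1 - x) * ∑ k ∈ range (n + 1), q k * k * x ^ (k - 1)
      = ∑ k ∈ range (n + 1), (q (k + 1) * (k + 1) - q k * k) * x ^ k := by
  have h_shift : ∑ k ∈ range (n + 1), q k * k * x ^ (k - 1)
      = ∑ k ∈ range (n + 1), q (k + 1) * (k + 1) * x ^ k := by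
    rw [sum_range_succ', sum_range_succ, hq]
    simp
  have h_mul : x * ∑ k ∈ range (n + 1), q k * k * x ^ (k - 1)
      = ∑ k ∈ range (n + 1), q k * k * x ^ k := by
    rw [mul_sum]
    refine sum_congr rfl fun k _ => ?_
    rcases k with _ | k
    · simp
    · simp only [Nat.add_sub_cancel, pow_succ]; ring
  rw [sub_mul, one_mul, h_mul, h_shift, ← sum_sub_distrib]
  simp only [sub_mul]

lemma poch_succ_right (x : ℝ) (k : ℕ) : poch x (k + 1) = poch x k * (x + k) :=
  ascPochhammer_succ_eval k x

lemma poch_succ_left (x : ℝ) (k : ℕ) : poch x (k + 1) = x * poch (x + 1) k := by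
  simp [poch, ascPochhammer_succ_left]

lemma poch_pos {x : ℝ} (hx : 0 < x) (k : ℕ) : 0 < poch x k :=
  ascPochhammer_pos k x hx

lemma poch_add_one {x : ℝ} (hx : x ≠ 0) (k : ℕ) :
    poch (x + 1) k = poch x k * (x + k) / x := by
  rw [eq_div_iff hx, mul_comm, ← poch_succ_left, poch_succ_right]

lemma factorial_mul_poch (n k : ℕ) :
    (n.factorial : ℝ) * poch (n + 1) k = (n + k).factorial := by
  have := congrArg (Nat.cast : ℕ → ℝ) (Nat.factorial_mul_ascFactorial n k)
  rw [← ascPochhammer_nat_eq_ascFactorial, Nat.cast_mul, ascPochhammer_eval_cast] at this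
  simpa [poch] using this

def jacobiCoeff (a b : ℝ) (n k : ℕ) : ℝ :=
  poch (-(n : ℝ)) k * poch ((n : ℝ) + a + b + 1) k / ((k.factorial : ℝ) * poch (a + 1) k)

lemma jacobiP_eq_sum (a b : ℝ) (n : ℕ) (t : ℝ) :
    jacobiP a b n t = poch (a + 1) n / (n.factorial : ℝ) *
      ∑ k ∈ range (n + 1), jacobiCoeff a b n k * ((1 - t) / 2) ^ k := rfl

lemma jacobiCoeff_self_add_one (a b : ℝ) (n : ℕ) : jacobiCoeff a b n (n + 1) = 0 := by
  simp [jacobiCoeff, poch_succ_right]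

lemma contDiff_jacobiP (a b : ℝ) (n : ℕ) : ContDiff ℝ ⊤ (jacobiP a b n) := by
  unfold jacobiP
  fun_prop

lemma hasDerivAt_jacobiP (a b : ℝ) (n : ℕ) (t : ℝ) :
    HasDerivAt (jacobiP a b n) (-(poch (a + 1) n / (n.factorial : ℝ)) / 2 *
      ∑ k ∈ range (n + 1), jacobiCoeff a b n k * k * ((1 - t) / 2) ^ (k - 1)) t := by
  have hx : HasDerivAt (fun t : ℝ => (1 - t) / 2) (-1 / 2) t := by
    simpa using ((hasDerivAt_id t).const_sub 1).div_const 2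
  have := (HasDerivAt.fun_sum (u := range (n + 1)) fun k _ =>
    (hx.fun_pow k).const_mul (jacobiCoeff a b n k)).const_mul (poch (a + 1) n / (n.factorial : ℝ))
  refine this.congr_deriv ?_
  rw [mul_sum, mul_sum]
  refine sum_congr rfl fun k _ => ?_
  ring

lemma jacobiP_contiguous {a : ℝ} (ha : -1 < a) (b : ℝ) (n : ℕ) (t : ℝ) :
    ((n : ℝ) + b + 1) * jacobiP (a + 1) b n t
      = (b + 1) * jacobiP a (b + 1) n t + (1 + t) * deriv (jacobiP a (b + 1) n) t := by
  have ha' : 0 < a + 1 := by linarith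
  rw [(hasDerivAt_jacobiP a (b + 1) n t).deriv, jacobiP_eq_sum, jacobiP_eq_sum,
    show 1 + t = 2 * (1 - (1 - t) / 2) by ring]
  generalize (1 - t) / 2 = x
  set A := poch (a + 1) n / (n.factorial : ℝ)
  have h_deriv_term : 2 * (1 - x) *
      (-A / 2 * ∑ k ∈ range (n + 1), jacobiCoeff a (b + 1) n k * k * x ^ (k - 1))
      = -A * ∑ k ∈ range (n + 1),
        (jacobiCoeff a (b + 1) n (k + 1) * (k + 1) - jacobiCoeff a (b + 1) n k * k) * x ^ k := by
    rw [← one_sub_mul_sum_mul_pow_pred _ (jacobiCoeff_self_add_one a (b + 1) n)]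
    ring
  rw [h_deriv_term]
  simp only [mul_sum, ← sum_add_distrib]
  refine sum_congr rfl fun k _ => ?_
  simp only [A, jacobiCoeff, poch_succ_right, Nat.factorial_succ, poch_add_one ha'.ne',
    show (n : ℝ) + (a + 1) + b + 1 = n + a + (b + 1) + 1 by ring]
  have := poch_pos ha' k
  have := poch_pos ha' n
  push_cast
  field_simp
  ring

lemma hasDerivAt_one_add_pow_mul_jacobiP {a : ℝ} (ha : -1 < a) (m n : ℕ) (t : ℝ) :
    HasDerivAt (fun t => (1 + t) ^ (m + 1) * jacobiP a (m + 1 : ℕ) n t)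
      (((n : ℝ) + m + 1) * ((1 + t) ^ m * jacobiP (a + 1) m n t)) t := by
  have hP := ((contDiff_jacobiP a (m + 1 : ℕ) n).differentiable (by simp) t).hasDerivAt
  refine ((((hasDerivAt_id t).const_add 1).fun_pow (m + 1)).mul hP).congr_deriv ?_
  have hc := jacobiP_contiguous ha m n t
  push_cast
  simp only [id, mul_one]
  linear_combination (1 + t) ^ m * hc.symm

lemma iteratedDeriv_one_add_pow_mul_jacobiP {a : ℝ} (ha : -1 < a) (n k m : ℕ) :
    iteratedDeriv k (fun t => (1 + t) ^ (m + k) * jacobiP a (m + k : ℕ) n t)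
      = fun t => poch ((n : ℝ) + m + 1) k * ((1 + t) ^ m * jacobiP (a + k) m n t) := by
  induction k generalizing m with
  | zero => simp [poch]
  | succ k ih =>
    rw [iteratedDeriv_succ, show m + (k + 1) = m + 1 + k by omega, ih (m + 1)]
    funext t
    have hk : -1 < a + k := by linarith [(Nat.cast_nonneg k : (0 : ℝ) ≤ k)]
    rw [((hasDerivAt_one_add_pow_mul_jacobiP hk m n t).const_mul _).deriv, poch_succ_left,
      show a + ((k + 1 : ℕ) : ℝ) = a + k + 1 by push_cast; ring]
    push_cast
    ring_nf

/-- iterated antiderivative of `P_n^{(a+s,0)}`. -/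
theorem integral_jacobiP_eq (a : ℝ) (ha : -1 < a) (s : ℕ) (hs : 1 ≤ s) (n : ℕ) (t : ℝ) :
    (∫ u in (-1 : ℝ)..t, (t - u) ^ (s - 1) / ((s - 1).factorial : ℝ) * jacobiP (a + s) 0 n u)
      = (n.factorial : ℝ) / ((n + s).factorial : ℝ) * (1 + t) ^ s * jacobiP a s n t := by
  obtain ⟨m, rfl⟩ : ∃ m, s = m + 1 := ⟨s - 1, by omega⟩
  have h_deriv : ∀ k ≤ m + 1,
      iteratedDeriv k (fun t => (1 + t) ^ (m + 1) * jacobiP a (m + 1 : ℕ) n t)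
        = fun t => poch ((n : ℝ) + (m + 1 - k : ℕ) + 1) k *
        ((1 + t) ^ (m + 1 - k) * jacobiP (a + k) (m + 1 - k : ℕ) n t) := fun k hk => by
    rw [← iteratedDeriv_one_add_pow_mul_jacobiP ha n k (m + 1 - k), Nat.sub_add_cancel hk]
  have h_smooth : ContDiff ℝ ⊤ fun t => (1 + t) ^ (m + 1) * jacobiP a (m + 1 : ℕ) n t :=
    (contDiff_const.add contDiff_id).pow _ |>.mul (contDiff_jacobiP _ _ _)
  have h_cauchy := eq_integral_iteratedDeriv_of_iteratedDeriv_eq_zero (m := m) (x₀ := -1)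
    (h_smooth.of_le le_top)
    (fun k hk => by rw [h_deriv k (by omega)]; simp [zero_pow (show m + 1 - k ≠ 0 by omega)]) t
  rw [h_deriv (m + 1) le_rfl] at h_cauchy
  simp only [smul_eq_mul, Nat.sub_self, Nat.cast_zero, pow_zero, one_mul, add_zero,
    mul_left_comm _ (poch _ _), intervalIntegral.integral_const_mul] at h_cauchy
  rw [← factorial_mul_poch, mul_assoc _ ((1 + t) ^ (m + 1)), h_cauchy, Nat.add_sub_cancel]
  have := poch_pos (show (0 : ℝ) < n + 1 by positivity) (m + 1)
  field_simp

end
end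

section
/- Let d ≥ 2, let s be a positive integer, β > −d−s, and λ_0,…,λ_{s−1} > 0. Let f : ℝ^d × ℝ → ℝ be s-times continuously differentiable on an open neighborhood of V₀^{d+1}, let n, m be integers with n−s < m ≤ n, and let Y be a solid harmonic of degree m. Then ⟨f, S_{m,Y}^{n,(β,−s)}⟩_{β,−s} = (−2)^{n−m} λ_{n−m} · (1/ω_d) ∫_{S^{d−1}} ∂_t^{n−m} f(ξ,1) Y(ξ) dσ(ξ). -/
open MeasureTheory Finset

noncomputable section

/-- Normalization constant `c_{a,b}`. -/
def cconst (a b : ℝ) : ℝ := Real.Gamma (a + b + 2) / (Real.Gamma (a + 1) * Real.Gamma (b + 1))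

/-- Norm square `h_n^{(a,b)}`. -/
def hJac (a b : ℝ) (n : ℕ) : ℝ :=
  poch (a + 1) n * poch (b + 1) n * (a + b + n + 1) /
    ((n.factorial : ℝ) * poch (a + b + 2) n * (a + b + 2 * n + 1))

/-- Norm square `ĥ_n^{(a,b)}`. -/
def hHat (a b : ℝ) (n : ℕ) : ℝ := 2 ^ (a + b + 1) / cconst a b * (jacobiA a b n) ^ 2 * hJac a b n

/-- The polynomials `J_n^{(a,-s)}`, built from `P̂^{(a+s,0)}`. -/
def jacobiJneg (a : ℝ) (s n : ℕ) (t : ℝ) : ℝ := jacobiJ (a + s) 0 s n t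

/-- Euclidean space `ℝ^d`. -/
abbrev Euc (d : ℕ) : Type := EuclideanSpace ℝ (Fin d)

/-- The surface measure on the unit sphere `S^{d-1} ⊂ ℝ^d`. -/
def sphMeasure (d : ℕ) : Measure (Metric.sphere (0 : Euc d) 1) :=
  (volume : Measure (Euc d)).toSphere

/-- Surface area `ω_d` of the unit sphere. -/
def omegaS (d : ℕ) : ℝ := (sphMeasure d Set.univ).toReal

/-- Integral over the sphere of a function defined on `ℝ^d`. -/
def sphInt (d : ℕ) (g : Euc d → ℝ) : ℝ := ∫ ξ, g (ξ : Euc d) ∂(sphMeasure d)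

/-- The conic surface `V_0^{d+1} = {(x,t) : ‖x‖ = t, 0 ≤ t ≤ 1}` as a subset of `ℝ^d × ℝ`. -/
def coneSet (d : ℕ) : Set (Euc d × ℝ) := {p | ‖p.1‖ = p.2 ∧ 0 ≤ p.2 ∧ p.2 ≤ 1}

/-- The integral `∫_{V_0^{d+1}} f dm`. -/
def coneInt (d : ℕ) (f : Euc d × ℝ → ℝ) : ℝ :=
  ∫ t in (0 : ℝ)..1, t ^ (d - 1) * sphInt d (fun ξ => f (t • ξ, t))

/-- `∂_t^k f`: the `k`-th partial derivative in the last variable `t`, with `x` fixed. -/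
def pdT (k : ℕ) (f : Euc d × ℝ → ℝ) : Euc d × ℝ → ℝ :=
  fun p => iteratedDeriv k (fun τ => f (p.1, τ)) p.2

/-- A solid harmonic of degree `m` on `ℝ^d`: a homogeneous polynomial annihilated by the
Laplacian. -/
def IsSolidHarmonic (d m : ℕ) (Y : Euc d → ℝ) : Prop :=
  ∃ q : MvPolynomial (Fin d) ℝ, q.IsHomogeneous m ∧
    (∑ i : Fin d, MvPolynomial.pderiv i (MvPolynomial.pderiv i q)) = 0 ∧
    ∀ x : Euc d, Y x = MvPolynomial.eval (fun i => x i) q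

/-- The ordinary inner product `⟨f,g⟩_{β,γ}` on the conic surface. -/
def coneInner (d : ℕ) (β γ : ℝ) (f g : Euc d × ℝ → ℝ) : ℝ :=
  cconst (β + d - 1) γ / omegaS d *
    coneInt d (fun p => f p * g p * p.2 ^ β * (1 - p.2) ^ γ)

/-- The (classical) Jacobi basis polynomial `S_{m,Y}^{n,(β,γ)}` on the cone. -/
def coneS (d : ℕ) (β γ : ℝ) (n m : ℕ) (Y : Euc d → ℝ) : Euc d × ℝ → ℝ :=
  fun p => jacobiP (2 * m + β + d - 1) γ (n - m) (1 - 2 * p.2) * Y p.1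

/-- The norm square `h_{n,m}^{β,γ}`. -/
def coneH (d : ℕ) (β γ : ℝ) (n m : ℕ) : ℝ :=
  poch (β + d) (2 * m) / poch (β + γ + d + 1) (2 * m) * hJac (2 * m + β + d - 1) γ (n - m)

/-- The orthogonal projection `proj_n^{β,γ} f` built from an orthonormal spanning family of
solid harmonics. -/
def coneProj (d : ℕ) (N : ℕ → ℕ) (Y : (m : ℕ) → Fin (N m) → Euc d → ℝ) (β γ : ℝ) (n : ℕ)
    (f : Euc d × ℝ → ℝ) : Euc d × ℝ → ℝ :=
  fun p => ∑ m ∈ Finset.range (n + 1), ∑ ℓ : Fin (N m),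
    coneInner d β γ f (coneS d β γ n m (Y m ℓ)) / coneH d β γ n m * coneS d β γ n m (Y m ℓ) p

/-- The Sobolev inner product `⟨f,g⟩_{β,-s}` on the conic surface. -/
def coneSobInner (d : ℕ) (β : ℝ) (s : ℕ) (lam : ℕ → ℝ) (f g : Euc d × ℝ → ℝ) : ℝ :=
  (1 / omegaS d) * coneInt d (fun p => pdT s f p * pdT s g p * p.2 ^ (β + s)) +
    ∑ k ∈ Finset.range s, lam k / omegaS d *
      sphInt d (fun ξ => pdT k f (ξ, 1) * pdT k g (ξ, 1))

/-- The Sobolev basis polynomial `S_{m,Y}^{n,(β,-s)}` on the cone. -/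
def coneSS (d : ℕ) (β : ℝ) (s n m : ℕ) (Y : Euc d → ℝ) : Euc d × ℝ → ℝ :=
  fun p => jacobiJneg (2 * m + β + d - 1) s (n - m) (1 - 2 * p.2) * Y p.1

/-- The Sobolev norm square `h_{m,n}^{(β,-s)}`. -/
def coneSobH (d : ℕ) (β : ℝ) (s : ℕ) (lam : ℕ → ℝ) (n m : ℕ) : ℝ :=
  if n - m < s then 2 ^ (2 * (n - m)) * lam (n - m)
  else 2 ^ ((s : ℝ) - β - 2 * m - d) * hHat ((s : ℝ) + 2 * m + β + d - 1) 0 (n - m - s)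

/-- The Sobolev orthogonal projection `proj_n^{β,-s} f`. -/
def coneSobProj (d : ℕ) (N : ℕ → ℕ) (Y : (m : ℕ) → Fin (N m) → Euc d → ℝ) (β : ℝ) (s : ℕ)
    (lam : ℕ → ℝ) (n : ℕ) (f : Euc d × ℝ → ℝ) : Euc d × ℝ → ℝ :=
  fun p => ∑ m ∈ Finset.range (n + 1), ∑ ℓ : Fin (N m),
    coneSobInner d β s lam f (coneSS d β s n m (Y m ℓ)) / coneSobH d β s lam n m *
      coneSS d β s n m (Y m ℓ) p

/-- The spherical harmonic projection `Proj_k[g]` built from the orthonormal spanning family. -/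
def sphProj (d : ℕ) (N : ℕ → ℕ) (Y : (m : ℕ) → Fin (N m) → Euc d → ℝ) (k : ℕ)
    (g : Euc d → ℝ) : Euc d → ℝ :=
  fun x => ∑ ℓ : Fin (N k), (1 / omegaS d) * sphInt d (fun ξ => g ξ * Y k ℓ ξ) * Y k ℓ x

/-- Hypotheses: `(Y_ℓ^m)` is an orthonormal spanning family of solid harmonics. -/
def IsONBasisFamily (d : ℕ) (N : ℕ → ℕ) (Y : (m : ℕ) → Fin (N m) → Euc d → ℝ) : Prop :=
  (∀ m ℓ, IsSolidHarmonic d m (Y m ℓ)) ∧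
  (∀ m (ℓ ℓ' : Fin (N m)),
    (1 / omegaS d) * sphInt d (fun ξ => Y m ℓ ξ * Y m ℓ' ξ) = if ℓ = ℓ' then 1 else 0) ∧
  (∀ m (Z : Euc d → ℝ), IsSolidHarmonic d m Z →
    ∃ c : Fin (N m) → ℝ, ∀ x, Z x = ∑ ℓ : Fin (N m), c ℓ * Y m ℓ x)

/-!
For `n - m < s` the factor `J_{n-m}^{(a,-s)}(1 - 2t)` is the monomial `(2 - 2t)^{n-m}/(n-m)!`, so
`S_{m,Y}^{n,(β,-s)}` is `Y(x)` times a multiple of `(t - 1)^{n-m}`. Its `s`-th `t`-derivative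
vanishes, which kills the integral over the cone, and at `t = 1` the `k`-th derivative vanishes
unless `k = n - m`, which kills every boundary term but one.
-/

theorem jacobiJneg_of_lt (a : ℝ) {s n : ℕ} (h : n < s) (t : ℝ) :
    jacobiJneg a s n t = (1 + t) ^ n / (n.factorial : ℝ) := by
  simp [jacobiJneg, jacobiJ, h]

theorem coneSS_eq_of_sub_lt {d : ℕ} (β : ℝ) {s n m : ℕ} (h : n - m < s) (Y : Euc d → ℝ) :
    coneSS d β s n m Y =
      fun p => (-2 : ℝ) ^ (n - m) / ((n - m).factorial : ℝ) * Y p.1 * (p.2 - 1) ^ (n - m) := by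
  funext p
  rw [coneSS, jacobiJneg_of_lt _ h, show 1 + (1 - 2 * p.2) = -2 * (p.2 - 1) by ring, mul_pow]
  ring

theorem pdT_mul_sub_pow {d : ℕ} (c : Euc d → ℝ) (a : ℝ) (j k : ℕ) (p : Euc d × ℝ) :
    pdT k (fun q => c q.1 * (q.2 - a) ^ j) p =
      c p.1 * ((j.descFactorial k : ℝ) * (p.2 - a) ^ (j - k)) := by
  simp only [pdT, iteratedDeriv_const_mul_field, iteratedDeriv_comp_sub_const (f := (· ^ j)),
    iteratedDeriv_pow]

theorem pdT_mul_sub_pow_of_lt {d : ℕ} (c : Euc d → ℝ) (a : ℝ) {j k : ℕ} (h : j < k) :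
    pdT k (fun q => c q.1 * (q.2 - a) ^ j) = 0 := by
  funext p
  simp [pdT_mul_sub_pow, Nat.descFactorial_eq_zero_iff_lt.mpr h]

theorem pdT_mul_sub_pow_apply_self {d : ℕ} (c : Euc d → ℝ) (a : ℝ) (j k : ℕ) (x : Euc d) :
    pdT k (fun q => c q.1 * (q.2 - a) ^ j) (x, a) =
      if k = j then c x * (j.factorial : ℝ) else 0 := by
  simp only [pdT, iteratedDeriv_const_mul_field, iteratedDeriv_comp_sub_const (f := (· ^ j)),
    sub_self, iteratedDeriv_fun_pow_zero]
  split_ifs <;> simp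

theorem coneSobInner_high_m_general (d : ℕ) (s : ℕ) (β : ℝ) (lam : ℕ → ℝ)
    (f : Euc d × ℝ → ℝ)
    (n m : ℕ) (hm₁ : n < m + s) (hm₂ : m ≤ n)
    (Y : Euc d → ℝ) :
    coneSobInner d β s lam f (coneSS d β s n m Y)
      = (-2 : ℝ) ^ (n - m) * lam (n - m) *
          ((1 / omegaS d) * sphInt d (fun ξ => pdT (n - m) f (ξ, 1) * Y ξ)) := by
  have hj : n - m < s := by omega
  set c : Euc d → ℝ := fun x => (-2 : ℝ) ^ (n - m) / ((n - m).factorial : ℝ) * Y x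
  have hc : ∀ ξ, c ξ * ((n - m).factorial : ℝ) = (-2 : ℝ) ^ (n - m) * Y ξ := fun ξ => by
    simp only [c]
    field_simp
  have hS : coneSS d β s n m Y = fun q => c q.1 * (q.2 - 1) ^ (n - m) :=
    coneSS_eq_of_sub_lt β hj Y
  rw [coneSobInner, hS, pdT_mul_sub_pow_of_lt c 1 hj,
    Finset.sum_eq_single_of_mem (n - m) (Finset.mem_range.mpr hj) fun k _ hk => by
      simp [pdT_mul_sub_pow_apply_self, hk, sphInt]]
  simp only [pdT_mul_sub_pow_apply_self, if_true, hc, Pi.zero_apply, mul_zero, zero_mul, coneInt,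
    sphInt, integral_zero, intervalIntegral.integral_zero, zero_add, mul_left_comm _ ((-2 : ℝ) ^ _),
    integral_const_mul]
  ring

/-- the Sobolev inner product of `f` against `S_{m,Y}^{n,(β,-s)}` when
`n - s < m ≤ n`. -/
theorem coneSobInner_high_m (d : ℕ) (hd : 2 ≤ d) (s : ℕ) (hs : 1 ≤ s) (β : ℝ)
    (hβ : -(d : ℝ) - s < β) (lam : ℕ → ℝ) (hlam : ∀ k, k ≤ s - 1 → 0 < lam k)
    (f : Euc d × ℝ → ℝ)
    (hf : ∃ U : Set (Euc d × ℝ), IsOpen U ∧ coneSet d ⊆ U ∧ ContDiffOn ℝ s f U)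
    (n m : ℕ) (hm₁ : n < m + s) (hm₂ : m ≤ n)
    (Y : Euc d → ℝ) (hY : IsSolidHarmonic d m Y) :
    coneSobInner d β s lam f (coneSS d β s n m Y)
      = (-2 : ℝ) ^ (n - m) * lam (n - m) *
          ((1 / omegaS d) * sphInt d (fun ξ => pdT (n - m) f (ξ, 1) * Y ξ)) :=
  coneSobInner_high_m_general d s β lam f n m hm₁ hm₂ Y
end
end

section
/- Let d ≥ 2 be an integer, γ ∈ ℝ, k ≥ 1 an integer, and let p : ℝ → ℝ be twice differentiable. Then for all real t: t(1−t) · ((1−t)^k p(t))″ + (d−1−(d+γ)t) · ((1−t)^k p(t))′ = (1−t)^k [ t(1−t) p″(t) + (d−1−(d+γ+2k)t) p′(t) ] − k (1−t)^{k−1} (d−1−(d+γ+k−1)t) p(t). -/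
/-! Writing `L f = t (1 - t) f'' + (d - 1 - (d + γ) t) f'`, the Leibniz rule gives
`L (w p) = w L p + 2 t (1 - t) w' p' + (L w) p`. For `w = (1 - t)^k` one has `(1 - t) w' = -k w`,
so the middle term shifts `γ` to `γ + 2k` in the coefficient of `p'`, and `L w` is the explicit
multiple `-k (1 - t)^(k - 1) (d - 1 - (d + γ + k - 1) t)` of `p`. -/

/-- The radial part of the operator `D_γ` on the cone, acting on functions of `t`. -/
noncomputable def radialOp (d γ : ℝ) (f : ℝ → ℝ) (t : ℝ) : ℝ :=
  t * (1 - t) * deriv (deriv f) t + (d - 1 - (d + γ) * t) * deriv f t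

lemma deriv_mul_eq {w p : ℝ → ℝ} (hw : Differentiable ℝ w) (hp : Differentiable ℝ p) :
    deriv (fun u => w u * p u) = fun u => deriv w u * p u + w u * deriv p u :=
  funext fun u => deriv_fun_mul (hw u) (hp u)

lemma deriv_deriv_mul {w p : ℝ → ℝ} (hw : Differentiable ℝ w) (hw' : Differentiable ℝ (deriv w))
    (hp : Differentiable ℝ p) (hp' : Differentiable ℝ (deriv p)) (t : ℝ) :
    deriv (deriv (fun u => w u * p u)) t
      = deriv (deriv w) t * p t + 2 * deriv w t * deriv p t + w t * deriv (deriv p) t := by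
  rw [deriv_mul_eq hw hp]
  convert (((hw' t).hasDerivAt.fun_mul (hp t).hasDerivAt).fun_add
    ((hw t).hasDerivAt.fun_mul (hp' t).hasDerivAt)).deriv using 1
  ring

lemma radialOp_mul (d γ : ℝ) {w p : ℝ → ℝ} (hw : Differentiable ℝ w)
    (hw' : Differentiable ℝ (deriv w)) (hp : Differentiable ℝ p)
    (hp' : Differentiable ℝ (deriv p)) (t : ℝ) :
    radialOp d γ (fun u => w u * p u) t
      = w t * radialOp d γ p t + 2 * t * (1 - t) * deriv w t * deriv p t
        + radialOp d γ w t * p t := by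
  simp only [radialOp]
  rw [deriv_deriv_mul hw hw' hp hp', deriv_fun_mul (hw t) (hp t)]
  ring

lemma deriv_one_sub_pow (n : ℕ) :
    deriv (fun u : ℝ => (1 - u) ^ n) = fun t => -((n : ℝ) * (1 - t) ^ (n - 1)) := by
  funext t
  have h : HasDerivAt (fun u : ℝ => 1 - u) (-1) t := by
    simpa using (hasDerivAt_id t).const_sub 1
  simpa using (h.fun_pow n).deriv

lemma one_sub_mul_deriv_one_sub_pow (n : ℕ) (t : ℝ) :
    (1 - t) * deriv (fun u : ℝ => (1 - u) ^ n) t = -(n * (1 - t) ^ n) := by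
  rw [deriv_one_sub_pow]
  rcases n.eq_zero_or_pos with rfl | hn
  · simp
  · rw [← pow_sub_one_mul hn.ne' (1 - t)]
    ring

lemma radialOp_one_sub_pow (d γ : ℝ) (k : ℕ) (t : ℝ) :
    radialOp d γ (fun u => (1 - u) ^ k) t
      = -(k * (1 - t) ^ (k - 1) * (d - 1 - (d + γ + k - 1) * t)) := by
  have h : (1 - t) * deriv (deriv fun u : ℝ => (1 - u) ^ k) t
      = k * (k - 1) * (1 - t) ^ (k - 1) := by
    rw [deriv_one_sub_pow k]
    simp only [deriv.fun_neg, deriv_const_mul_field']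
    rw [mul_neg, mul_left_comm, one_sub_mul_deriv_one_sub_pow]
    rcases k.eq_zero_or_pos with rfl | hk
    · simp
    · rw [Nat.cast_pred hk]
      ring
  rw [radialOp, mul_assoc t, h, deriv_one_sub_pow]
  ring

theorem Dgamma_commutation_general (d : ℕ) (γ : ℝ) (k : ℕ)
    (p : ℝ → ℝ) (hp : Differentiable ℝ p) (hp' : Differentiable ℝ (deriv p)) (t : ℝ) :
    t * (1 - t) * deriv (deriv (fun u => (1 - u) ^ k * p u)) t
        + ((d : ℝ) - 1 - ((d : ℝ) + γ) * t) * deriv (fun u => (1 - u) ^ k * p u) t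
      = (1 - t) ^ k *
          (t * (1 - t) * deriv (deriv p) t
            + ((d : ℝ) - 1 - ((d : ℝ) + γ + 2 * k) * t) * deriv p t)
        - k * (1 - t) ^ (k - 1) * ((d : ℝ) - 1 - ((d : ℝ) + γ + k - 1) * t) * p t := by
  have hw : Differentiable ℝ fun u : ℝ => (1 - u) ^ k := by fun_prop
  have hw' : Differentiable ℝ (deriv fun u : ℝ => (1 - u) ^ k) := by
    rw [deriv_one_sub_pow]
    fun_prop
  change radialOp d γ (fun u => (1 - u) ^ k * p u) t = _
  have hshift := one_sub_mul_deriv_one_sub_pow k t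
  rw [radialOp_mul d γ hw hw' hp hp', radialOp_one_sub_pow, radialOp]
  linear_combination 2 * t * deriv p t * hshift

/-- one-variable commutation identity for the operator `D_γ`. -/
theorem Dgamma_commutation (d : ℕ) (hd : 2 ≤ d) (γ : ℝ) (k : ℕ) (hk : 1 ≤ k)
    (p : ℝ → ℝ) (hp : Differentiable ℝ p) (hp' : Differentiable ℝ (deriv p)) (t : ℝ) :
    t * (1 - t) * deriv (deriv (fun u => (1 - u) ^ k * p u)) t
        + ((d : ℝ) - 1 - ((d : ℝ) + γ) * t) * deriv (fun u => (1 - u) ^ k * p u) t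
      = (1 - t) ^ k *
          (t * (1 - t) * deriv (deriv p) t
            + ((d : ℝ) - 1 - ((d : ℝ) + γ + 2 * k) * t) * deriv p t)
        - k * (1 - t) ^ (k - 1) * ((d : ℝ) - 1 - ((d : ℝ) + γ + k - 1) * t) * p t :=
  Dgamma_commutation_general d γ k p hp hp' t
end
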